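/- Let (X,μ) be a good Cantor measure space and A ⊆ X a closed subset with μ(A) > 0. Then for every ε > 0 there exist finitely many measure-preserving homeomorphisms h_1, …, h_n of X such that μ(h_1(A) ∪ ⋯ ∪ h_n(A)) > μ(X) − ε. -/

import Mathlib

/-!
Any two clopen sets `C`, `D` of equal measure are exchanged by a measure-preserving
homeomorphism. Starting from the matched partitions `{C, Cᶜ}` and `{D, Dᶜ}`, cut every piece along
the `n`-th set of a countable family of clopen sets separating points, and cut its partner along a
clopen set of the same measure, which the Subset Condition provides; doing this on both sides
alternately, the partner cells of the cells of `x` shrink to a single point `e x`. The map `e` is a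
homeomorphism sending every cell onto its partner, hence preserves `μ`, because the cells form a
π-system generating the Borel sets.

Now take a clopen `U ⊇ A` with `μ (U \ A) < δ` and cover `X` by `N + 1` clopen sets `V j` of
measure at most `μ U`, where `μ X ≤ (N + 1) μ A`. Each `V j` is the image of a clopen `W j ⊆ U`
under a measure-preserving homeomorphism `h j`, so `h j '' A` misses at most `μ (W j \ A) < δ` of
`V j`, and the union of the `h j '' A` misses at most `(N + 1) δ` of `X`.
-/

open MeasureTheory Set

open TopologicalSpace Function
open scoped ENNReal

theorem ENNReal.sub_lt_of_le_add_of_lt_min {a b c ε : ℝ≥0∞} (hb : b ≠ ∞) (h : a ≤ b + c)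
    (hc : c < min ε a) : a - ε < b :=
  calc a - ε ≤ a - min ε a := tsub_le_tsub_left (min_le_left ε a) a
    _ < b := ENNReal.sub_lt_of_lt_add (min_le_right ε a)
        (h.trans_lt (ENNReal.add_lt_add_left hb hc))

section CutFamily

variable {α ι : Type*}

def cutFamily (f S : ι → Set α) (p : ι × Bool) : Set α :=
  bif p.2 then f p.1 ∩ S p.1 else f p.1 \ S p.1

theorem cutFamily_subset (f S : ι → Set α) (p : ι × Bool) : cutFamily f S p ⊆ f p.1 := by
  cases hb : p.2 <;> simp [cutFamily, hb, inter_subset_left]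

theorem cutFamily_subset_or_subset_compl (f : ι → Set α) (S : Set α) (p : ι × Bool) :
    cutFamily f (fun _ => S) p ⊆ S ∨ cutFamily f (fun _ => S) p ⊆ Sᶜ := by
  cases hb : p.2
  · exact Or.inr fun x hx => by simp_all [cutFamily]
  · exact Or.inl fun x hx => by simp_all [cutFamily]

theorem iUnion_cutFamily (f S : ι → Set α) : ⋃ p, cutFamily f S p = ⋃ i, f i := by
  ext x
  simp [cutFamily, Prod.exists, Bool.exists_bool, ← and_or_left, em']

theorem pairwise_disjoint_cutFamily {f : ι → Set α} (hf : Pairwise (Disjoint on f))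
    (S : ι → Set α) : Pairwise (Disjoint on cutFamily f S) := by
  rintro ⟨i, b⟩ ⟨j, c⟩ hne
  obtain rfl | hij := eq_or_ne i j
  · have hd : Disjoint (f i \ S i) (f i ∩ S i) := disjoint_sdiff_left.mono_right inter_subset_right
    cases b <;> cases c
    exacts [absurd rfl hne, hd, hd.symm, absurd rfl hne]
  · exact (hf hij).mono (cutFamily_subset f S _) (cutFamily_subset f S _)

end CutFamily

section CantorSpace

variable {X : Type*} [TopologicalSpace X]

section Topology

variable [CompactSpace X] [T2Space X] [TotallyDisconnectedSpace X]

theorem exists_seq_isClopen_separating [SecondCountableTopology X] :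
    ∃ B : ℕ → Set X, (∀ n, IsClopen (B n)) ∧ ∀ x y, x ≠ y → ∃ n, x ∈ B n ∧ y ∉ B n := by
  have : Countable (Clopens X) := Clopens.countable_iff_secondCountable.2 inferInstance
  obtain ⟨b, hb⟩ := exists_surjective_nat (Clopens X)
  refine ⟨fun n => b n, fun n => (b n).isClopen, fun x y hxy => ?_⟩
  obtain ⟨C, hC, hxC, hyC⟩ := exists_isClopen_of_totally_separated hxy
  obtain ⟨n, hn⟩ := hb ⟨C, hC⟩
  exact ⟨n, by simpa [hn] using hxC, by simpa [hn] using hyC⟩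

theorem IsClosed.exists_isClopen_superset_measure_diff_lt [MeasurableSpace X] [BorelSpace X]
    {μ : Measure X} [IsFiniteMeasure μ] [μ.OuterRegular] {A : Set X} (hA : IsClosed A)
    {δ : ℝ≥0∞} (hδ : δ ≠ 0) : ∃ U, IsClopen U ∧ A ⊆ U ∧ μ (U \ A) < δ := by
  obtain ⟨O, hAO, hO, -, hOA⟩ := hA.measurableSet.exists_isOpen_sdiff_lt (measure_ne_top μ A) hδ
  obtain ⟨U, hU, hAU, hUO⟩ := exists_clopen_of_closed_subset_open hA hO hAO
  exact ⟨U, hU, hAU, (measure_mono (sdiff_subset_sdiff_left hUO)).trans_lt hOA⟩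

end Topology

variable [MeasurableSpace X]

section SubsetCondition

variable (μ : Measure X)

def SubsetCondition : Prop :=
  ∀ U V : Set X, IsClopen U → IsClopen V → μ U < μ V → ∃ W, W ⊆ V ∧ IsClopen W ∧ μ W = μ U

variable {μ}

theorem SubsetCondition.exists_isClopen_subset_measure_eq (hsc : SubsetCondition μ)
    {U V : Set X} (hU : IsClopen U) (hV : IsClopen V) (h : μ U ≤ μ V) :
    ∃ W ⊆ V, IsClopen W ∧ μ W = μ U := by
  rcases h.lt_or_eq with h | h
  · exact hsc U V hU hV h
  · exact ⟨V, subset_rfl, hV, h.symm⟩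

theorem SubsetCondition.exists_isClopen_cover_measure_le [OpensMeasurableSpace X]
    [IsFiniteMeasure μ] (hsc : SubsetCondition μ) {U : Set X} (hU : IsClopen U) :
    ∀ (n : ℕ) {R : Set X}, IsClopen R → μ R ≤ (n + 1) * μ U →
      ∃ V : Fin (n + 1) → Set X, (∀ j, IsClopen (V j)) ∧ (∀ j, μ (V j) ≤ μ U) ∧ R ⊆ ⋃ j, V j
  | 0, R, hR, hRU => ⟨fun _ => R, fun _ => hR, fun _ => by simpa using hRU,
      fun x hx => mem_iUnion.2 ⟨0, hx⟩⟩
  | n + 1, R, hR, hRU => by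
    obtain ⟨W, hWR, hW, hWU, hRW⟩ :
        ∃ W ⊆ R, IsClopen W ∧ μ W ≤ μ U ∧ μ (R \ W) ≤ (n + 1) * μ U := by
      rcases le_total (μ U) (μ R) with hUR | hRU'
      · obtain ⟨W, hWR, hW, hWU⟩ := hsc.exists_isClopen_subset_measure_eq hU hR hUR
        refine ⟨W, hWR, hW, hWU.le, ?_⟩
        rw [measure_sdiff hWR hW.isOpen.measurableSet.nullMeasurableSet (measure_ne_top μ W),
          hWU, tsub_le_iff_right]
        convert hRU using 1
        push_cast
        ring
      · exact ⟨R, subset_rfl, hR, hRU', by simp⟩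
    obtain ⟨V, hV, hVU, hRV⟩ := exists_isClopen_cover_measure_le hsc hU n (hR.diff hW) hRW
    refine ⟨Fin.cons W V, Fin.forall_fin_succ.2 ⟨hW, hV⟩, Fin.forall_fin_succ.2 ⟨hWU, hVU⟩,
      fun x hx => ?_⟩
    by_cases hxW : x ∈ W
    · exact mem_iUnion.2 ⟨0, hxW⟩
    · obtain ⟨j, hj⟩ := mem_iUnion.1 (hRV ⟨hx, hxW⟩)
      exact mem_iUnion.2 ⟨j.succ, hj⟩

end SubsetCondition

structure MatchedPartition (μ : Measure X) where
  ι : Type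
  fst : ι → Set X
  snd : ι → Set X
  isClopen_fst : ∀ i, IsClopen (fst i)
  isClopen_snd : ∀ i, IsClopen (snd i)
  measure_fst_eq : ∀ i, μ (fst i) = μ (snd i)
  pairwise_disjoint_fst : Pairwise (Disjoint on fst)
  pairwise_disjoint_snd : Pairwise (Disjoint on snd)
  iUnion_fst : ⋃ i, fst i = univ
  iUnion_snd : ⋃ i, snd i = univ

namespace MatchedPartition

variable {μ : Measure X}

def swap (m : MatchedPartition μ) : MatchedPartition μ where
  ι := m.ι
  fst := m.snd
  snd := m.fst
  isClopen_fst := m.isClopen_snd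
  isClopen_snd := m.isClopen_fst
  measure_fst_eq i := (m.measure_fst_eq i).symm
  pairwise_disjoint_fst := m.pairwise_disjoint_snd
  pairwise_disjoint_snd := m.pairwise_disjoint_fst
  iUnion_fst := m.iUnion_snd
  iUnion_snd := m.iUnion_fst

def Refines (m' m : MatchedPartition μ) : Prop :=
  ∀ j, ∃ i, m'.fst j ⊆ m.fst i ∧ m'.snd j ⊆ m.snd i

theorem Refines.trans {m'' m' m : MatchedPartition μ} (h₂ : m''.Refines m') (h₁ : m'.Refines m) :
    m''.Refines m := fun k =>
  let ⟨j, hj⟩ := h₂ k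
  let ⟨i, hi⟩ := h₁ j
  ⟨i, hj.1.trans hi.1, hj.2.trans hi.2⟩

theorem Refines.swap {m' m : MatchedPartition μ} (h : m'.Refines m) : m'.swap.Refines m.swap :=
  fun j => (h j).imp fun _ => And.symm

section Cells

variable (m : MatchedPartition μ)

theorem eq_of_mem_fst {x : X} {i j : m.ι} (hi : x ∈ m.fst i) (hj : x ∈ m.fst j) : i = j :=
  m.pairwise_disjoint_fst.eq (not_disjoint_iff.2 ⟨x, hi, hj⟩)

noncomputable def cell (x : X) : m.ι :=
  (iUnion_eq_univ_iff.1 m.iUnion_fst x).choose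

theorem mem_fst_cell (x : X) : x ∈ m.fst (m.cell x) :=
  (iUnion_eq_univ_iff.1 m.iUnion_fst x).choose_spec

theorem eq_cell_of_mem_fst {x : X} {i : m.ι} (h : x ∈ m.fst i) : i = m.cell x :=
  m.eq_of_mem_fst h (m.mem_fst_cell x)

end Cells

section Cut

variable [OpensMeasurableSpace X] [IsFiniteMeasure μ]

def ofIsClopen {C D : Set X} (hC : IsClopen C) (hD : IsClopen D) (h : μ C = μ D) :
    MatchedPartition μ where
  ι := Bool
  fst b := bif b then C else Cᶜ
  snd b := bif b then D else Dᶜ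
  isClopen_fst b := by cases b; exacts [hC.compl, hC]
  isClopen_snd b := by cases b; exacts [hD.compl, hD]
  measure_fst_eq b := by
    cases b
    · rw [cond_false, cond_false, measure_compl hC.isOpen.measurableSet (measure_ne_top μ C),
        measure_compl hD.isOpen.measurableSet (measure_ne_top μ D), h]
    · exact h
  pairwise_disjoint_fst := pairwise_disjoint_on_bool.2 disjoint_compl_right
  pairwise_disjoint_snd := pairwise_disjoint_on_bool.2 disjoint_compl_right
  iUnion_fst := by rw [← union_eq_iUnion, union_compl_self]
  iUnion_snd := by rw [← union_eq_iUnion, union_compl_self]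

variable (m : MatchedPartition μ)

def cut (S T : m.ι → Set X) (hS : ∀ i, IsClopen (S i)) (hT : ∀ i, IsClopen (T i))
    (hST : ∀ i, μ (m.fst i ∩ S i) = μ (m.snd i ∩ T i)) : MatchedPartition μ where
  ι := m.ι × Bool
  fst := cutFamily m.fst S
  snd := cutFamily m.snd T
  isClopen_fst := fun ⟨i, b⟩ => by
    cases b
    exacts [(m.isClopen_fst i).diff (hS i), (m.isClopen_fst i).inter (hS i)]
  isClopen_snd := fun ⟨i, b⟩ => by
    cases b
    exacts [(m.isClopen_snd i).diff (hT i), (m.isClopen_snd i).inter (hT i)]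
  measure_fst_eq := fun ⟨i, b⟩ => by
    cases b
    · show μ (m.fst i \ S i) = μ (m.snd i \ T i)
      refine (ENNReal.add_right_inj (measure_ne_top μ (m.fst i ∩ S i))).1 ?_
      rw [measure_inter_add_sdiff _ (hS i).isOpen.measurableSet, hST i,
        measure_inter_add_sdiff _ (hT i).isOpen.measurableSet, m.measure_fst_eq]
    · exact hST i
  pairwise_disjoint_fst := pairwise_disjoint_cutFamily m.pairwise_disjoint_fst S
  pairwise_disjoint_snd := pairwise_disjoint_cutFamily m.pairwise_disjoint_snd T
  iUnion_fst := (iUnion_cutFamily _ _).trans m.iUnion_fst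
  iUnion_snd := (iUnion_cutFamily _ _).trans m.iUnion_snd

theorem cut_refines (S T : m.ι → Set X) (hS : ∀ i, IsClopen (S i)) (hT : ∀ i, IsClopen (T i))
    (hST : ∀ i, μ (m.fst i ∩ S i) = μ (m.snd i ∩ T i)) : (m.cut S T hS hT hST).Refines m :=
  fun p => ⟨p.1, cutFamily_subset _ _ p, cutFamily_subset _ _ p⟩

theorem exists_refines_fst_subset_or_subset_compl (hsc : SubsetCondition μ) {S : Set X}
    (hS : IsClopen S) :
    ∃ m' : MatchedPartition μ, m'.Refines m ∧ ∀ j, m'.fst j ⊆ S ∨ m'.fst j ⊆ Sᶜ := by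
  choose W hWsnd hW hWμ using fun i =>
    hsc.exists_isClopen_subset_measure_eq ((m.isClopen_fst i).inter hS) (m.isClopen_snd i)
      (m.measure_fst_eq i ▸ measure_mono inter_subset_left)
  have hST : ∀ i, μ (m.fst i ∩ S) = μ (m.snd i ∩ W i) := fun i => by
    rw [inter_eq_right.2 (hWsnd i), hWμ]
  exact ⟨m.cut (fun _ => S) W (fun _ => hS) hW hST, m.cut_refines _ _ _ _ hST,
    cutFamily_subset_or_subset_compl m.fst S⟩

theorem exists_refines_subset_or_subset_compl (hsc : SubsetCondition μ) {S : Set X}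
    (hS : IsClopen S) : ∃ m' : MatchedPartition μ, m'.Refines m ∧
      (∀ j, m'.fst j ⊆ S ∨ m'.fst j ⊆ Sᶜ) ∧ ∀ j, m'.snd j ⊆ S ∨ m'.snd j ⊆ Sᶜ := by
  obtain ⟨m₁, h₁, hS₁⟩ := m.exists_refines_fst_subset_or_subset_compl hsc hS
  obtain ⟨m₂, h₂, hS₂⟩ := m₁.swap.exists_refines_fst_subset_or_subset_compl hsc hS
  refine ⟨m₂.swap, h₂.swap.trans h₁, fun j => ?_, hS₂⟩
  obtain ⟨i, -, hi⟩ := h₂ j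
  exact (hS₁ i).imp hi.trans hi.trans

end Cut

def FstSeparatesPoints (s : ℕ → MatchedPartition μ) : Prop :=
  ∀ x y : X, x ≠ y → ∃ n i, x ∈ (s n).fst i ∧ y ∉ (s n).fst i

theorem FstSeparatesPoints.eq_of_forall_mem_iff {s : ℕ → MatchedPartition μ}
    (hs : FstSeparatesPoints s) {x y : X} (h : ∀ n i, x ∈ (s n).fst i ↔ y ∈ (s n).fst i) :
    x = y := by
  by_contra hxy
  obtain ⟨n, i, hx, hy⟩ := hs x y hxy
  exact hy ((h n i).1 hx)

theorem fstSeparatesPoints_of_subset_or_subset_compl {s : ℕ → MatchedPartition μ}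
    {B : ℕ → Set X} (hB : ∀ x y, x ≠ y → ∃ n, x ∈ B n ∧ y ∉ B n)
    (hs : ∀ n j, (s (n + 1)).fst j ⊆ B n ∨ (s (n + 1)).fst j ⊆ (B n)ᶜ) :
    FstSeparatesPoints s := fun x y hxy => by
  obtain ⟨n, hx, hy⟩ := hB x y hxy
  refine ⟨n + 1, (s (n + 1)).cell x, (s (n + 1)).mem_fst_cell x, fun hy' => ?_⟩
  rcases hs n ((s (n + 1)).cell x) with h | h
  exacts [hy (h hy'), h ((s (n + 1)).mem_fst_cell x) hx]

section Sequence

variable {s : ℕ → MatchedPartition μ}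

theorem refines_of_le (hs : ∀ n, (s (n + 1)).Refines (s n)) {n n' : ℕ} (h : n ≤ n') :
    (s n').Refines (s n) := by
  induction n', h using Nat.le_induction with
  | base => exact fun i => ⟨i, subset_rfl, subset_rfl⟩
  | succ n' _ ih => exact (hs n').trans ih

theorem cell_subset_cell (hs : ∀ n, (s (n + 1)).Refines (s n)) {n n' : ℕ} (h : n ≤ n') (x : X) :
    (s n').fst ((s n').cell x) ⊆ (s n).fst ((s n).cell x) ∧
      (s n').snd ((s n').cell x) ⊆ (s n).snd ((s n).cell x) := by
  obtain ⟨i, hfst, hsnd⟩ := refines_of_le hs h ((s n').cell x)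
  obtain rfl := (s n).eq_cell_of_mem_fst (hfst ((s n').mem_fst_cell x))
  exact ⟨hfst, hsnd⟩

theorem isPiSystem_fst (hs : ∀ n, (s (n + 1)).Refines (s n)) :
    IsPiSystem {V | ∃ n i, (s n).fst i = V} := by
  have key : ∀ {n n'}, n ≤ n' → ∀ i j, ((s n).fst i ∩ (s n').fst j).Nonempty →
      (s n).fst i ∩ (s n').fst j = (s n').fst j := by
    rintro n n' h i j ⟨x, hxi, hxj⟩
    obtain ⟨i', hi', -⟩ := refines_of_le hs h j
    obtain rfl := (s n).eq_of_mem_fst hxi (hi' hxj)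
    exact inter_eq_right.2 hi'
  rintro _ ⟨n, i, rfl⟩ _ ⟨n', j, rfl⟩ hne
  rcases le_total n n' with h | h
  · exact ⟨n', j, (key h i j hne).symm⟩
  · rw [inter_comm] at hne ⊢
    exact ⟨n, i, (key h j i hne).symm⟩

variable [CompactSpace X]

theorem isTopologicalBasis_fst (hs : ∀ n, (s (n + 1)).Refines (s n))
    (hsep : FstSeparatesPoints s) : IsTopologicalBasis {V | ∃ n i, (s n).fst i = V} := by
  refine isTopologicalBasis_of_isOpen_of_nhds ?_ fun x O hxO hO => ?_
  · rintro _ ⟨n, i, rfl⟩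
    exact ((s n).isClopen_fst i).isOpen
  have hclosed : ∀ n, IsClosed ((s n).fst ((s n).cell x)) := fun n =>
    ((s n).isClopen_fst _).isClosed
  obtain ⟨n, hn⟩ := exists_subset_nhds_of_isCompact'
    (Antitone.directed_ge fun _ _ h => (cell_subset_cell hs h x).1)
    (fun n => (hclosed n).isCompact) hclosed (U := O) fun y hy => by
      obtain rfl : y = x := by
        by_contra hyx
        obtain ⟨n, i, hx, hy'⟩ := hsep x y (Ne.symm hyx)
        rw [(s n).eq_cell_of_mem_fst hx] at hy'
        exact hy' (mem_iInter.1 hy n)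
      exact hO.mem_nhds hxO
  exact ⟨_, ⟨n, _, rfl⟩, (s n).mem_fst_cell x, hn⟩

theorem exists_preimage_snd_eq [μ.IsOpenPosMeasure] (hs : ∀ n, (s (n + 1)).Refines (s n)) :
    ∃ f : X → X, ∀ n i, f ⁻¹' (s n).snd i = (s n).fst i := by
  have hne : ∀ x, (⋂ n, (s n).snd ((s n).cell x)).Nonempty := fun x =>
    IsCompact.nonempty_iInter_of_sequence_nonempty_isCompact_isClosed _
      (fun n => (cell_subset_cell hs n.le_succ x).2)
      (fun n => nonempty_of_measure_ne_zero <| (s n).measure_fst_eq _ ▸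
        ((s n).isClopen_fst _).isOpen.measure_ne_zero μ ⟨x, (s n).mem_fst_cell x⟩)
      ((s 0).isClopen_snd _).isClosed.isCompact fun n => ((s n).isClopen_snd _).isClosed
  choose f hf using hne
  refine ⟨f, fun n i => Set.ext fun x => ⟨fun hx => ?_, fun hx => ?_⟩⟩
  · rw [(s n).swap.eq_of_mem_fst hx (mem_iInter.1 (hf x) n)]
    exact (s n).mem_fst_cell x
  · rw [(s n).eq_cell_of_mem_fst hx]
    exact mem_iInter.1 (hf x) n

theorem exists_homeomorph_preimage_snd_eq [μ.IsOpenPosMeasure]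
    (hs : ∀ n, (s (n + 1)).Refines (s n)) (hfst : FstSeparatesPoints s)
    (hsnd : FstSeparatesPoints fun n => (s n).swap) :
    ∃ e : X ≃ₜ X, ∀ n i, e ⁻¹' (s n).snd i = (s n).fst i := by
  have hs' : ∀ n, (s (n + 1)).swap.Refines (s n).swap := fun n => (hs n).swap
  obtain ⟨f, hf⟩ := exists_preimage_snd_eq hs
  obtain ⟨g, hg⟩ := exists_preimage_snd_eq (s := fun n => (s n).swap) hs'
  have hgf : ∀ x, g (f x) = x := fun x => hfst.eq_of_forall_mem_iff fun n i =>
    (Set.ext_iff.1 (hg n i) (f x)).trans (Set.ext_iff.1 (hf n i) x)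
  have hfg : ∀ y, f (g y) = y := fun y => hsnd.eq_of_forall_mem_iff fun n i =>
    (Set.ext_iff.1 (hf n i) (g y)).trans (Set.ext_iff.1 (hg n i) y)
  refine ⟨⟨⟨f, g, hgf, hfg⟩, ?_, ?_⟩, hf⟩
  · refine (isTopologicalBasis_fst hs' hsnd).continuous_iff.2 ?_
    rintro _ ⟨n, i, rfl⟩
    exact (hf n i).symm ▸ ((s n).isClopen_fst i).isOpen
  · refine (isTopologicalBasis_fst hs hfst).continuous_iff.2 ?_
    rintro _ ⟨n, i, rfl⟩
    exact (hg n i).symm ▸ ((s n).isClopen_snd i).isOpen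

theorem measurePreserving_of_preimage_snd_eq [SecondCountableTopology X] [BorelSpace X]
    [IsFiniteMeasure μ] (hs : ∀ n, (s (n + 1)).Refines (s n))
    (hsnd : FstSeparatesPoints fun n => (s n).swap) {f : X → X} (hf : Measurable f)
    (hfs : ∀ n i, f ⁻¹' (s n).snd i = (s n).fst i) : MeasurePreserving f μ μ := by
  have hs' : ∀ n, (s (n + 1)).swap.Refines (s n).swap := fun n => (hs n).swap
  refine ⟨hf, ext_of_generate_finite _ ?_ (isPiSystem_fst (s := fun n => (s n).swap) hs') ?_ ?_⟩
  · exact ‹BorelSpace X›.measurable_eq.trans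
      (isTopologicalBasis_fst hs' hsnd).borel_eq_generateFrom
  · rintro _ ⟨n, i, rfl⟩
    change μ.map f ((s n).snd i) = μ ((s n).snd i)
    rw [Measure.map_apply hf ((s n).isClopen_snd i).isOpen.measurableSet]
    exact (congrArg μ (hfs n i)).trans ((s n).measure_fst_eq i)
  · rw [Measure.map_apply hf MeasurableSet.univ, preimage_univ]

end Sequence

end MatchedPartition

open MatchedPartition in
theorem exists_measurePreserving_homeomorph_image_eq [CompactSpace X] [T2Space X]
    [TotallyDisconnectedSpace X] [SecondCountableTopology X] [BorelSpace X] {μ : Measure X}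
    [IsFiniteMeasure μ] [μ.IsOpenPosMeasure] (hsc : SubsetCondition μ) {C D : Set X}
    (hC : IsClopen C) (hD : IsClopen D) (h : μ C = μ D) :
    ∃ e : X ≃ₜ X, MeasurePreserving e μ μ ∧ e '' C = D := by
  obtain ⟨B, hB, hBsep⟩ := exists_seq_isClopen_separating (X := X)
  choose F hF hFfst hFsnd using fun n (m : MatchedPartition μ) =>
    m.exists_refines_subset_or_subset_compl hsc (hB n)
  let s : ℕ → MatchedPartition μ := fun n => Nat.rec (ofIsClopen hC hD h) F n
  have hs : ∀ n, (s (n + 1)).Refines (s n) := fun n => hF n (s n)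
  have hsnd : FstSeparatesPoints fun n => (s n).swap :=
    fstSeparatesPoints_of_subset_or_subset_compl hBsep fun n => hFsnd n (s n)
  obtain ⟨e, he⟩ := exists_homeomorph_preimage_snd_eq hs
    (fstSeparatesPoints_of_subset_or_subset_compl hBsep fun n => hFfst n (s n)) hsnd
  refine ⟨e, measurePreserving_of_preimage_snd_eq hs hsnd e.measurable he, ?_⟩
  have hCD : e ⁻¹' D = C := he 0 true
  rw [← hCD, e.image_preimage]

theorem MeasureTheory.MeasurePreserving.measure_homeomorph_image [BorelSpace X] {μ : Measure X}
    {e : X ≃ₜ X} (he : MeasurePreserving e μ μ) (S : Set X) : μ (e '' S) = μ S := by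
  rw [e.image_eq_preimage_symm]
  exact (he.symm e.toMeasurableEquiv).measure_preimage_equiv S

theorem measure_compl_iUnion_image_le [BorelSpace X] {μ : Measure X} {ι : Type*} [Fintype ι]
    {A U : Set X} {V W : ι → Set X} {e : ι → X ≃ₜ X} (he : ∀ j, MeasurePreserving (e j) μ μ)
    (hWU : ∀ j, W j ⊆ U) (heW : ∀ j, e j '' W j = V j) (hV : univ ⊆ ⋃ j, V j) :
    μ (⋃ j, e j '' A)ᶜ ≤ Fintype.card ι * μ (U \ A) := by
  have hsub : (⋃ j, e j '' A)ᶜ ⊆ ⋃ j, e j '' (W j \ A) := by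
    intro x hx
    obtain ⟨j, hj⟩ := mem_iUnion.1 (hV (mem_univ x))
    rw [← heW j] at hj
    obtain ⟨y, hy, rfl⟩ := hj
    exact mem_iUnion.2 ⟨j, y, ⟨hy, fun hyA => hx (mem_iUnion.2 ⟨j, y, hyA, rfl⟩)⟩, rfl⟩
  calc μ (⋃ j, e j '' A)ᶜ ≤ ∑ j, μ (e j '' (W j \ A)) :=
        (measure_mono hsub).trans (measure_iUnion_fintype_le μ _)
    _ = ∑ j, μ (W j \ A) := by simp only [(he _).measure_homeomorph_image]
    _ ≤ ∑ _j : ι, μ (U \ A) :=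
        Finset.sum_le_sum fun j _ => measure_mono (sdiff_subset_sdiff_left (hWU j))
    _ = Fintype.card ι * μ (U \ A) := by simp

end CantorSpace

theorem stmt5_general {X : Type*} [TopologicalSpace X] [CompactSpace X]
    [TopologicalSpace.MetrizableSpace X] [TotallyDisconnectedSpace X]
    [MeasurableSpace X] [BorelSpace X]
    (μ : MeasureTheory.Measure X) [MeasureTheory.IsFiniteMeasure μ]
    (hpos : ∀ U : Set X, IsOpen U → U.Nonempty → 0 < μ U)
    (hsc : ∀ U V : Set X, IsClopen U → IsClopen V → μ U < μ V →
      ∃ W, W ⊆ V ∧ IsClopen W ∧ μ W = μ U)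
    (A : Set X) (hA : IsClosed A) (hApos : 0 < μ A)
    (ε : ENNReal) (hε : 0 < ε) :
    ∃ (n : ℕ) (h : Fin n → X ≃ₜ X),
      (∀ i : Fin n, ∀ S : Set X, MeasurableSet S → μ ((h i) '' S) = μ S) ∧
      μ Set.univ - ε < μ (⋃ i : Fin n, (h i) '' A) := by
  have : μ.IsOpenPosMeasure := ⟨fun U hU hne => (hpos U hU hne).ne'⟩
  replace hsc : SubsetCondition μ := hsc
  obtain ⟨N, hN⟩ : ∃ N : ℕ, μ univ ≤ (N + 1) * μ A := by
    obtain ⟨N, hN⟩ := ENNReal.exists_nat_mul_gt hApos.ne' (measure_ne_top μ univ)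
    exact ⟨N, hN.le.trans (by gcongr; exact le_self_add)⟩
  have hη : min ε (μ univ) ≠ 0 := (lt_min hε (hApos.trans_le (measure_mono (subset_univ A)))).ne'
  obtain ⟨δ, hδ, hδN⟩ := ENNReal.exists_pos_mul_lt (a := N + 1) (by simp) hη
  obtain ⟨U, hU, hAU, hUA⟩ := hA.exists_isClopen_superset_measure_diff_lt (μ := μ) hδ.ne'
  obtain ⟨V, hV, hVU, hcover⟩ := hsc.exists_isClopen_cover_measure_le hU N isClopen_univ
    (hN.trans (by gcongr))
  choose W hWU hW hWV using fun j => hsc.exists_isClopen_subset_measure_eq (hV j) hU (hVU j)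
  choose e he heW using fun j =>
    exists_measurePreserving_homeomorph_image_eq hsc (hW j) (hV j) (hWV j)
  refine ⟨N + 1, e, fun j S _ => (he j).measure_homeomorph_image S,
    ENNReal.sub_lt_of_le_add_of_lt_min (measure_ne_top μ _) (measure_univ_le_add_compl _) ?_⟩
  calc μ (⋃ j, e j '' A)ᶜ ≤ (N + 1) * μ (U \ A) := by
        simpa using measure_compl_iUnion_image_le he hWU heW hcover
    _ ≤ (N + 1) * δ := by gcongr
    _ < min ε (μ univ) := by rwa [mul_comm]

/-- Ergodicity property of good Cantor measure spaces. -/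
theorem stmt5 {X : Type*} [TopologicalSpace X] [CompactSpace X] [T2Space X]
    [TopologicalSpace.MetrizableSpace X] [TotallyDisconnectedSpace X]
    [MeasurableSpace X] [BorelSpace X]
    (μ : MeasureTheory.Measure X) [MeasureTheory.IsFiniteMeasure μ]
    (hperf : ∀ x : X, ¬ IsOpen ({x} : Set X))
    (hcont : ∀ x : X, μ {x} = 0)
    (hpos : ∀ U : Set X, IsOpen U → U.Nonempty → 0 < μ U)
    (hsc : ∀ U V : Set X, IsClopen U → IsClopen V → μ U < μ V →
      ∃ W, W ⊆ V ∧ IsClopen W ∧ μ W = μ U)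
    (A : Set X) (hA : IsClosed A) (hApos : 0 < μ A)
    (ε : ENNReal) (hε : 0 < ε) :
    ∃ (n : ℕ) (h : Fin n → X ≃ₜ X),
      (∀ i : Fin n, ∀ S : Set X, MeasurableSet S → μ ((h i) '' S) = μ S) ∧
      μ Set.univ - ε < μ (⋃ i : Fin n, (h i) '' A) :=
  stmt5_general μ hpos hsc A hA hApos ε hε
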